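/- Let A be the tree-expanded series with parameter w defined by A = Y + w (A / Y) + (Y ∖ A) + w (A / Y ∖ A), where Y is the one-vertex tree, and let B = Y − w (Y / B) − (B ∖ Y) − w (Y / B ∖ Y). Then A∘B = Y in the composition group of tree-expanded series, i.e., A is the compositional inverse of B. -/

import Mathlib

/-- Planar binary trees: a leaf, or an internal vertex with two subtrees. -/
inductive PBT : Type
  | leaf : PBT
  | node : PBT → PBT → PBT
  deriving DecidableEq

namespace PBT

/-- Number of internal vertices of a planar binary tree. -/
def size : PBT → ℕ
  | leaf => 0
  | node l r => size l + size r + 1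

/-- `under u v` ("u ∖ v") grafts `v` at the rightmost leaf of `u`. -/
def under : PBT → PBT → PBT
  | leaf, v => v
  | node l r, v => node l (under r v)

/-- `over u v` ("u / v") grafts `u` at the leftmost leaf of `v`. -/
def overT (u : PBT) : PBT → PBT
  | leaf => u
  | node l r => node (overT u l) r

/-- Number of internal vertices on the rightmost path (right spine). -/
def rightSpine : PBT → ℕ
  | leaf => 0
  | node _ r => rightSpine r + 1

/-- The left comb with `p` internal vertices. -/
def leftComb : ℕ → PBT
  | 0 => leaf
  | p + 1 => node (leftComb p) leaf

/-- The right comb with `q` internal vertices. -/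
def rightComb : ℕ → PBT
  | 0 => leaf
  | q + 1 => node leaf (rightComb q)

/-- The list of all factorizations `t = u ∖ v` (each exactly once). -/
def underFactors : PBT → List (PBT × PBT)
  | leaf => [(leaf, leaf)]
  | node l r => (leaf, node l r) :: (underFactors r).map (fun p => (node l p.1, p.2))

/-- The list of all factorizations `t = u / v` (each exactly once). -/
def overFactors : PBT → List (PBT × PBT)
  | leaf => [(leaf, leaf)]
  | node l r => (node l r, leaf) :: (overFactors l).map (fun p => (p.1, node p.2 r))

/-- Convolution of tree-expanded series dual to the over product:
`(A / B)_w = Σ_{s / t = w} A_s B_t`. -/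
def overConv {R : Type*} [CommRing R] (f g : PBT → R) (w : PBT) : R :=
  ((overFactors w).map (fun p => f p.1 * g p.2)).sum

/-- Convolution of tree-expanded series dual to the under product:
`(A ∖ B)_w = Σ_{s ∖ t = w} A_s B_t`. -/
def underConv {R : Type*} [CommRing R] (f g : PBT → R) (w : PBT) : R :=
  ((underFactors w).map (fun p => f p.1 * g p.2)).sum

/-- The list of all planar binary trees with `n` internal vertices. -/
def treesOfSize : ℕ → List PBT
  | 0 => [leaf]
  | n + 1 =>
    (List.range (n + 1)).attach.flatMap (fun i =>
      (treesOfSize i.1).flatMap (fun l =>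
        (treesOfSize (n - i.1)).map (fun r => node l r)))
  termination_by n => n
  decreasing_by
  all_goals first
    | exact List.mem_range.mp i.2
    | exact Nat.lt_succ_of_le (Nat.sub_le _ _)

/-- `treePow B t` is the series `B^t = μ_t(B,…,B)`, the substitution of the
series `B` in all internal vertices of `t` (duplicial operad composition),
using the decomposition `l ∨ r = (l / Y) ∖ r`. -/
def treePow {R : Type*} [CommRing R] (B : PBT → R) : PBT → PBT → R
  | leaf => fun w => if w = leaf then 1 else 0
  | node l r => underConv (overConv (treePow B l) B) (treePow B r)

/-- Composition of tree-expanded series: `(A ∘ B)_w = Σ_t A_t (B^t)_w`,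
where only trees with at most `|w|` vertices can contribute. -/
def comp {R : Type*} [CommRing R] (A B : PBT → R) (w : PBT) : R :=
  (((List.range (size w + 1)).flatMap treesOfSize).map
    (fun t => A t * treePow B t w)).sum

/-- The series reduced to the one-vertex tree `Y`. -/
def Yser {R : Type*} [CommRing R] : PBT → R :=
  fun t => if t = node leaf leaf then 1 else 0

/-- The series reduced to the root tree `|` (unit for the over/under products). -/
def unitSer {R : Type*} [CommRing R] : PBT → R :=
  fun t => if t = leaf then 1 else 0

/-- Suspension of a tree-expanded series: the coefficient on a tree with `n`
internal vertices is multiplied by `(-1)^(n-1)`. -/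
def susp {R : Type*} [CommRing R] (A : PBT → R) : PBT → R :=
  fun t => (-1 : R) ^ (size t + 1) * A t

/-- One covering step of the Tamari order: a right rotation
`(a ∨ b) ∨ c ⟶ a ∨ (b ∨ c)` somewhere in the tree. -/
inductive TamariStep : PBT → PBT → Prop
  | rot (a b c : PBT) : TamariStep (node (node a b) c) (node a (node b c))
  | left {l l' : PBT} (r : PBT) : TamariStep l l' → TamariStep (node l r) (node l' r)
  | right (l : PBT) {r r' : PBT} : TamariStep r r' → TamariStep (node l r) (node l r')

/-- The Tamari partial order on planar binary trees. -/
def tle : PBT → PBT → Prop := Relation.ReflTransGen TamariStep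

end PBT

/-!
Every term of the defining equation of `A` is a grafting `(f / Y) ∖ g` (with the unit series `|`
allowed as a factor), and composition with `B` turns such a grafting into
`((f ∘ B) / B) ∖ (g ∘ B)`. Hence `C = A ∘ B` solves `C = B + w (C / B) + B ∖ C + w ((C / B) ∖ C)`.
The defining equation of `B` says exactly that `Y` solves the same equation, and as `B` vanishes on
the root tree the coefficient of a solution on a tree is determined by its coefficients on smaller
trees, so the solution is unique.
-/

theorem List.sum_map_finset_sum {α ι M : Type*} [AddCommMonoid M] (L : List α) (s : Finset ι)
    (f : ι → α → M) : (L.map fun a => ∑ i ∈ s, f i a).sum = ∑ i ∈ s, (L.map (f i)).sum := by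
  induction L with
  | nil => simp
  | cons a L ih => simp [ih, Finset.sum_add_distrib]

namespace PBT

variable {R : Type*} [CommRing R]

theorem eq_leaf_of_size_eq_zero {t : PBT} (h : size t = 0) : t = leaf := by
  cases t with
  | leaf => rfl
  | node l r => simp [size] at h

theorem size_add_of_mem_overFactors {w : PBT} {p : PBT × PBT} (hp : p ∈ overFactors w) :
    size p.1 + size p.2 = size w := by
  induction w generalizing p with
  | leaf => simp_all [overFactors, size]
  | node l r ihl _ =>
    simp only [overFactors, List.mem_cons, List.mem_map] at hp
    rcases hp with rfl | ⟨q, hq, rfl⟩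
    · simp [size]
    · have := ihl hq
      simp only [size]
      omega

theorem size_add_of_mem_underFactors {w : PBT} {p : PBT × PBT} (hp : p ∈ underFactors w) :
    size p.1 + size p.2 = size w := by
  induction w generalizing p with
  | leaf => simp_all [underFactors, size]
  | node l r _ ihr =>
    simp only [underFactors, List.mem_cons, List.mem_map] at hp
    rcases hp with rfl | ⟨q, hq, rfl⟩
    · simp [size]
    · have := ihr hq
      simp only [size]
      omega

theorem overConv_leaf (f g : PBT → R) : overConv f g leaf = f leaf * g leaf := by
  simp [overConv, overFactors]

theorem overConv_node (f g : PBT → R) (l r : PBT) :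
    overConv f g (node l r) = f (node l r) * g leaf + overConv f (fun x => g (node x r)) l := by
  simp [overConv, overFactors, Function.comp_def]

theorem underConv_node (f g : PBT → R) (l r : PBT) :
    underConv f g (node l r) = f leaf * g (node l r) + underConv (fun x => f (node l x)) g r := by
  simp [underConv, underFactors, Function.comp_def]

theorem overConv_mul_const (f g : PBT → R) (c : R) (w : PBT) :
    overConv f (fun x => g x * c) w = overConv f g w * c := by
  simp [overConv, ← mul_assoc, List.sum_map_mul_right]

theorem underConv_const_mul (f g : PBT → R) (c : R) (w : PBT) :
    underConv (fun x => c * f x) g w = c * underConv f g w := by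
  simp [underConv, mul_assoc, List.sum_map_mul_left]

@[simp] theorem unitSer_leaf : (unitSer : PBT → R) leaf = 1 := rfl

@[simp] theorem unitSer_node (l r : PBT) : (unitSer : PBT → R) (node l r) = 0 := by
  simp [unitSer]

theorem overConv_unitSer_left (f : PBT → R) : overConv unitSer f = f := by
  funext w
  induction w generalizing f with
  | leaf => simp [overConv_leaf]
  | node l r ihl _ => simp [overConv_node, ihl]

theorem overConv_unitSer_right (f : PBT → R) : overConv f unitSer = f := by
  funext w
  cases w with
  | leaf => simp [overConv_leaf]
  | node l r => rw [overConv_node]; simp [overConv]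

theorem underConv_unitSer_left (f : PBT → R) : underConv unitSer f = f := by
  funext w
  cases w with
  | leaf => simp [underConv, underFactors]
  | node l r => rw [underConv_node]; simp [underConv]

theorem underConv_unitSer_right (f : PBT → R) : underConv f unitSer = f := by
  funext w
  induction w generalizing f with
  | leaf => simp [underConv, underFactors]
  | node l r _ ihr => simp [underConv_node, ihr]

def graft (f g : PBT → R) : PBT → R
  | leaf => 0
  | node l r => f l * g r

theorem Yser_eq_graft : (Yser : PBT → R) = graft unitSer unitSer := by
  funext t
  rcases t with _ | ⟨_ | _, _ | _⟩ <;> simp [Yser, graft]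

theorem overConv_Yser (f : PBT → R) : overConv f Yser = graft f unitSer := by
  funext w
  cases w with
  | leaf => simp [overConv_leaf, Yser, graft]
  | node l r =>
    simp only [overConv_node, Yser_eq_graft, graft, mul_zero, zero_add, overConv_mul_const,
      overConv_unitSer_right]

theorem underConv_graft_unitSer (f g : PBT → R) :
    underConv (graft f unitSer) g = graft f g := by
  funext w
  cases w with
  | leaf => simp [underConv, underFactors, graft]
  | node l r =>
    simp only [underConv_node, graft, zero_mul, zero_add, underConv_const_mul,
      underConv_unitSer_left]

theorem underConv_overConv_Yser (f g : PBT → R) :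
    underConv (overConv f Yser) g = graft f g := by
  rw [overConv_Yser, underConv_graft_unitSer]

theorem underConv_Yser (g : PBT → R) : underConv Yser g = graft unitSer g := by
  rw [Yser_eq_graft, underConv_graft_unitSer]

theorem mem_treesOfSize {n : ℕ} {t : PBT} : t ∈ treesOfSize n ↔ size t = n := by
  induction t generalizing n with
  | leaf => cases n <;> simp [treesOfSize, size]
  | node l r ihl ihr =>
    cases n with
    | zero => simp [treesOfSize, size]
    | succ n =>
      rw [treesOfSize]
      simp only [List.mem_flatMap, List.mem_attach, List.mem_map, node.injEq, true_and, size]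
      constructor
      · rintro ⟨⟨i, hi⟩, a, ha, b, hb, rfl, rfl⟩
        rw [ihl] at ha
        rw [ihr] at hb
        dsimp only at ha hb
        have := List.mem_range.1 hi
        omega
      · intro h
        exact ⟨⟨size l, List.mem_range.2 (by omega)⟩, l, ihl.2 rfl, r,
          ihr.2 (by dsimp only; omega), rfl, rfl⟩

theorem nodup_treesOfSize (n : ℕ) : (treesOfSize n).Nodup := by
  induction n using Nat.strong_induction_on with
  | _ n ih =>
    cases n with
    | zero => simp [treesOfSize]
    | succ n =>
      rw [treesOfSize, List.nodup_flatMap]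
      refine ⟨fun i _ => List.nodup_flatMap.2 ⟨fun l _ => ?_, ?_⟩, ?_⟩
      · exact (ih _ (by omega)).map fun _ _ h => (node.inj h).2
      · refine (ih i (List.mem_range.1 i.2)).imp fun hne t h₁ h₂ => ?_
        obtain ⟨r₁, -, rfl⟩ := List.mem_map.1 h₁
        obtain ⟨r₂, -, h⟩ := List.mem_map.1 h₂
        exact hne (node.inj h).1.symm
      · refine (List.nodup_attach.2 List.nodup_range).imp fun hne t h₁ h₂ => hne ?_
        simp only [List.mem_flatMap, List.mem_map] at h₁ h₂
        obtain ⟨l₁, hl₁, r₁, -, rfl⟩ := h₁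
        obtain ⟨l₂, hl₂, r₂, -, h⟩ := h₂
        obtain rfl := (node.inj h).1
        exact Subtype.ext ((mem_treesOfSize.1 hl₁).symm.trans (mem_treesOfSize.1 hl₂))

def treesUpTo (n : ℕ) : Finset PBT := ((List.range (n + 1)).flatMap treesOfSize).toFinset

theorem mem_treesUpTo {n : ℕ} {t : PBT} : t ∈ treesUpTo n ↔ size t ≤ n := by
  simp [treesUpTo, mem_treesOfSize]

theorem comp_eq_sum_treesUpTo (f B : PBT → R) (w : PBT) :
    comp f B w = ∑ t ∈ treesUpTo (size w), f t * treePow B t w := by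
  have hnodup : ((List.range (size w + 1)).flatMap treesOfSize).Nodup := by
    refine List.nodup_flatMap.2 ⟨fun n _ => nodup_treesOfSize n, ?_⟩
    exact List.nodup_range.imp fun hne t h₁ h₂ =>
      hne ((mem_treesOfSize.1 h₁).symm.trans (mem_treesOfSize.1 h₂))
  rw [comp, treesUpTo, List.sum_toFinset _ hnodup]

theorem treePow_eq_zero {B : PBT → R} (hB0 : B leaf = 0) {t w : PBT} (hw : size w < size t) :
    treePow B t w = 0 := by
  induction t generalizing w with
  | leaf => simp [size] at hw
  | node l r ihl ihr =>
    refine List.sum_eq_zero fun x hx => ?_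
    obtain ⟨p, hp, rfl⟩ := List.mem_map.1 hx
    have hp' := size_add_of_mem_underFactors hp
    by_cases hr : size p.2 < size r
    · rw [ihr hr, mul_zero]
    refine mul_eq_zero_of_left (List.sum_eq_zero fun y hy => ?_) _
    obtain ⟨q, hq, rfl⟩ := List.mem_map.1 hy
    have hq' := size_add_of_mem_overFactors hq
    by_cases hl : size q.1 < size l
    · rw [ihl hl, zero_mul]
    have hq2 : size q.2 = 0 := by simp only [size] at hw; omega
    rw [eq_leaf_of_size_eq_zero hq2, hB0, mul_zero]

theorem comp_eq_sum {f B : PBT → R} (hB0 : B leaf = 0) {w : PBT} {s : Finset PBT}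
    (hs : ∀ t ∉ s, size t ≤ size w → f t = 0) :
    comp f B w = ∑ t ∈ s, f t * treePow B t w := by
  rw [comp_eq_sum_treesUpTo]
  calc ∑ t ∈ treesUpTo (size w), f t * treePow B t w
      = ∑ t ∈ treesUpTo (size w) ∪ s, f t * treePow B t w := by
        refine Finset.sum_subset Finset.subset_union_left fun t _ ht => ?_
        rw [treePow_eq_zero hB0 (not_le.1 (mt mem_treesUpTo.2 ht)), mul_zero]
    _ = ∑ t ∈ s, f t * treePow B t w := by
        refine (Finset.sum_subset Finset.subset_union_right fun t ht hts => ?_).symm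
        have := (Finset.mem_union.1 ht).resolve_right hts
        rw [hs t hts (mem_treesUpTo.1 this), zero_mul]

theorem comp_eq_sum_treesUpTo_of_le {f B : PBT → R} (hB0 : B leaf = 0) {w : PBT} {n : ℕ}
    (hw : size w ≤ n) : comp f B w = ∑ t ∈ treesUpTo n, f t * treePow B t w :=
  comp_eq_sum hB0 fun _ ht htw => absurd (mem_treesUpTo.2 (htw.trans hw)) ht

theorem comp_add (f g B : PBT → R) : comp (f + g) B = comp f B + comp g B := by
  funext w
  simp [comp, add_mul, List.sum_map_add]

theorem comp_smul (c : R) (f B : PBT → R) : comp (c • f) B = c • comp f B := by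
  funext w
  simp [comp, mul_assoc, List.sum_map_mul_left]

theorem comp_unitSer {B : PBT → R} (hB0 : B leaf = 0) : comp unitSer B = unitSer := by
  funext w
  rw [comp_eq_sum hB0 (s := {leaf}) fun t ht _ => by cases t <;> simp_all]
  simp [treePow, unitSer]

theorem overConv_comp_eq_sum {f B : PBT → R} (hB0 : B leaf = 0) {w : PBT} {n : ℕ}
    (hw : size w ≤ n) :
    overConv (comp f B) B w = ∑ l ∈ treesUpTo n, f l * overConv (treePow B l) B w := by
  unfold overConv
  rw [List.map_congr_left fun q hq => by
    rw [comp_eq_sum_treesUpTo_of_le hB0 (n := n) (by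
      have := size_add_of_mem_overFactors hq; omega), Finset.sum_mul]]
  simp only [List.sum_map_finset_sum, mul_assoc, List.sum_map_mul_left]

theorem comp_graft {B : PBT → R} (hB0 : B leaf = 0) (f g : PBT → R) :
    comp (graft f g) B = underConv (overConv (comp f B) B) (comp g B) := by
  funext w
  set S := treesUpTo (size w)
  calc comp (graft f g) B w
      = ∑ t ∈ (S ×ˢ S).image (fun p => node p.1 p.2), graft f g t * treePow B t w := by
        refine comp_eq_sum hB0 fun t ht htw => ?_
        cases t with
        | leaf => rfl
        | node l r =>
          simp only [size] at htw
          refine (ht (Finset.mem_image.2 ⟨(l, r), Finset.mem_product.2 ⟨?_, ?_⟩, rfl⟩)).elim <;>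
            exact mem_treesUpTo.2 (by dsimp only; omega)
    _ = ∑ l ∈ S, ∑ r ∈ S, f l * g r * treePow B (node l r) w := by
        rw [Finset.sum_image fun _ _ _ _ h => Prod.ext_iff.2 (node.inj h), Finset.sum_product]
        rfl
    _ = ((underFactors w).map fun p => ∑ l ∈ S, ∑ r ∈ S,
          f l * g r * (overConv (treePow B l) B p.1 * treePow B r p.2)).sum := by
        simp only [List.sum_map_finset_sum, List.sum_map_mul_left]
        rfl
    _ = underConv (overConv (comp f B) B) (comp g B) w := by
        refine congrArg List.sum (List.map_congr_left fun p hp => ?_)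
        have := size_add_of_mem_underFactors hp
        rw [overConv_comp_eq_sum hB0 (n := size w) (by omega),
          comp_eq_sum_treesUpTo_of_le hB0 (n := size w) (by omega), Finset.sum_mul_sum]
        exact Finset.sum_congr rfl fun l _ => Finset.sum_congr rfl fun r _ => by ring

theorem overConv_congr_of_lt {f f' g : PBT → R} (hg : g leaf = 0) {w : PBT}
    (h : ∀ v, size v < size w → f v = f' v) : overConv f g w = overConv f' g w := by
  refine congrArg List.sum (List.map_congr_left fun p hp => ?_)
  by_cases hp₂ : p.2 = leaf
  · rw [hp₂, hg, mul_zero, mul_zero]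
  · have := size_add_of_mem_overFactors hp
    have := mt eq_leaf_of_size_eq_zero hp₂
    rw [h p.1 (by omega)]

theorem underConv_congr_of_lt {f f' g g' : PBT → R} (hf : f leaf = 0) {w : PBT}
    (hf' : ∀ v, size v ≤ size w → f v = f' v) (hg : ∀ v, size v < size w → g v = g' v) :
    underConv f g w = underConv f' g' w := by
  refine congrArg List.sum (List.map_congr_left fun p hp => ?_)
  by_cases hp₁ : p.1 = leaf
  · rw [hp₁, ← hf' leaf (Nat.zero_le _), hf, zero_mul, zero_mul]
  · have := size_add_of_mem_underFactors hp
    have := mt eq_leaf_of_size_eq_zero hp₁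
    rw [hf' p.1 (by omega), hg p.2 (by omega)]

/-- `A = rhsA w Yser A` is the defining equation of `A`. -/
def rhsA (c : R) (B X : PBT → R) : PBT → R :=
  B + c • overConv X B + underConv B X + c • underConv (overConv X B) X

theorem rhsA_congr_of_lt {c : R} {B X X' : PBT → R} (hB0 : B leaf = 0) {w : PBT}
    (h : ∀ v, size v < size w → X v = X' v) : rhsA c B X w = rhsA c B X' w := by
  have hover : ∀ v, size v ≤ size w → overConv X B v = overConv X' B v :=
    fun v hv => overConv_congr_of_lt hB0 fun u hu => h u (by omega)
  simp only [rhsA, Pi.add_apply, Pi.smul_apply, smul_eq_mul]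
  rw [hover w le_rfl, underConv_congr_of_lt hB0 (fun _ _ => rfl) h,
    underConv_congr_of_lt (by simp [overConv_leaf, hB0]) hover h]

theorem eq_of_rhsA_eq {c : R} {B X X' : PBT → R} (hB0 : B leaf = 0)
    (hX : rhsA c B X = X) (hX' : rhsA c B X' = X') : X = X' := by
  funext w
  induction hn : size w using Nat.strong_induction_on generalizing w with
  | _ n ih =>
    rw [← hX, ← hX']
    exact rhsA_congr_of_lt hB0 fun v hv => ih _ (hn ▸ hv) v rfl

theorem comp_rhsA_Yser {B : PBT → R} (hB0 : B leaf = 0) (c : R) (f : PBT → R) :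
    comp (rhsA c Yser f) B = rhsA c B (comp f B) := by
  rw [rhsA, underConv_overConv_Yser, overConv_Yser, underConv_Yser, Yser_eq_graft]
  simp only [comp_add, comp_smul, comp_graft hB0, comp_unitSer hB0, overConv_unitSer_left,
    underConv_unitSer_right]
  rfl

end PBT

open PBT Polynomial in
theorem comp_inverse_AB_general (A B : PBT → Polynomial ℚ)
    (hB0 : B PBT.leaf = 0)
    (hA : ∀ t : PBT, A t = Yser t + X * overConv A Yser t + underConv Yser A t
        + X * underConv (overConv A Yser) A t)
    (hB : ∀ t : PBT, B t = Yser t - X * overConv Yser B t - underConv B Yser t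
        - X * underConv (overConv Yser B) Yser t) :
    comp A B = Yser := by
  have hA' : rhsA X Yser A = A := (funext hA).symm
  have hB' : rhsA X B Yser = Yser := funext fun t => by
    simp only [rhsA, Pi.add_apply, Pi.smul_apply, smul_eq_mul]
    linear_combination hB t
  refine eq_of_rhsA_eq hB0 ?_ hB'
  rw [← comp_rhsA_Yser hB0, hA']

open PBT Polynomial in
/-- if `A = Y + w (A/Y) + (Y∖A) + w (A/Y∖A)` and
`B = Y - w (Y/B) - (B∖Y) - w (Y/B∖Y)` (series with coefficients in `ℚ[w]`,
vanishing on the root tree), then `A ∘ B = Y`: `A` is the compositional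
inverse of `B` in the group of tree-expanded formal diffeomorphisms. -/
theorem comp_inverse_AB (A B : PBT → Polynomial ℚ)
    (hA0 : A PBT.leaf = 0) (hB0 : B PBT.leaf = 0)
    (hA : ∀ t : PBT, A t = Yser t + X * overConv A Yser t + underConv Yser A t
        + X * underConv (overConv A Yser) A t)
    (hB : ∀ t : PBT, B t = Yser t - X * overConv Yser B t - underConv B Yser t
        - X * underConv (overConv Yser B) Yser t) :
    comp A B = Yser :=
  comp_inverse_AB_general A B hB0 hA hB
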